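/- arXiv:2505.23640 — 3 statements merged into one kernel-verified Lean document; each statement's English description precedes it below -/
import Mathlib

section
/- Fix integers 2 ≤ n0 ≤ n. The projection map sending a candidate assignment (A, r, d, δ) to its adjacency component A is a bijection from the set of candidate assignments satisfying the graph-encoding constraints (C1)–(C8) onto the set of adjacency matrices A(G) of digraphs G on [n] whose node number n1 satisfies n0 ≤ n1 ≤ n. -/
/-- A directed walk of length `k` from `u` to `v` along the edge relation `E`. -/
def HasWalk {V : Type*} (E : V → V → Prop) (k : ℕ) (u v : V) : Prop :=
  ∃ f : Fin (k + 1) → V, f 0 = u ∧ f (Fin.last k) = v ∧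
    ∀ i : Fin k, E (f i.castSucc) (f i.succ)

/-- `u` reaches `v` : `u = v` or there is a directed path from `u` to `v`. -/
def Reaches {V : Type*} (E : V → V → Prop) (u v : V) : Prop :=
  ∃ k, HasWalk E k u v

/-- Truncated shortest distance: the length of a shortest directed path from `u` to `v`
(`0` if `u = v`), and the sentinel value `n` if `u` does not reach `v`. -/
noncomputable def distG {V : Type*} (E : V → V → Prop) (n : ℕ) (u v : V) : ℕ :=
  letI := Classical.propDecidable (Reaches E u v)
  if Reaches E u v then sInf {k | HasWalk E k u v} else n

/-- Graph-derived reachability indicator `r(G)`. -/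
noncomputable def rG {V : Type*} (E : V → V → Prop) (u v : V) : ℕ :=
  letI := Classical.propDecidable (Reaches E u v)
  if Reaches E u v then 1 else 0

/-- Graph-derived shortest-path membership indicator `δ(G)`. -/
noncomputable def deltaG {V : Type*} [DecidableEq V] (E : V → V → Prop) (n : ℕ)
    (u v w : V) : ℕ :=
  if u = v then (if w = v then 1 else 0)
  else if w = u ∨ w = v then 1
  else
    letI := Classical.propDecidable
      (Reaches E u w ∧ Reaches E w v ∧ distG E n u w + distG E n w v = distG E n u v)
    if Reaches E u w ∧ Reaches E w v ∧ distG E n u w + distG E n w v = distG E n u v then 1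
    else 0

/-- A candidate assignment `(A, r, d, δ)` of the graph encoding on `[n]`. -/
structure Candidate (n : ℕ) where
  A : Fin n → Fin n → ℕ
  r : Fin n → Fin n → ℕ
  d : Fin n → Fin n → ℕ
  delta : Fin n → Fin n → Fin n → ℕ

/-- The graph-encoding constraints (C1)–(C8), together with the variable-domain
requirements (all of `A, r, δ` binary, `d` ranging over `{0,…,n}`). -/
def Feasible (n0 n : ℕ) (c : Candidate n) : Prop :=
  -- variable domains
  (∀ u v, c.A u v = 0 ∨ c.A u v = 1) ∧
  (∀ u v, c.r u v = 0 ∨ c.r u v = 1) ∧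
  (∀ u v, c.d u v ≤ n) ∧
  (∀ u v w, c.delta u v w = 0 ∨ c.delta u v w = 1) ∧
  -- (C1)
  (n0 ≤ ∑ v, c.A v v) ∧
  (∀ v : Fin n, ∀ h : (v : ℕ) + 1 < n, c.A ⟨(v : ℕ) + 1, h⟩ ⟨(v : ℕ) + 1, h⟩ ≤ c.A v v) ∧
  -- (C2)
  (∀ u v, u ≠ v → (c.A u u = 0 ∨ c.A v v = 0) →
    c.A u v = 0 ∧ c.r u v = 0 ∧ c.d u v = n) ∧
  -- (C3)
  (∀ v, c.r v v = 1 ∧ c.d v v = 0 ∧ c.delta v v v = 1 ∧ ∀ w, w ≠ v → c.delta v v w = 0) ∧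
  -- (C4)
  (∀ u v, u ≠ v → (c.A u v = 1 → c.r u v = 1 ∧ c.d u v = 1) ∧ (c.A u v = 0 → 2 ≤ c.d u v)) ∧
  -- (C5)
  (∀ u v, u ≠ v → (c.d u v < n ↔ c.r u v = 1)) ∧
  -- (C6)
  (∀ u v w, u ≠ v → v ≠ w → u ≠ w →
    (c.delta u v w = 1 → c.r u w = 1 ∧ c.r w v = 1) ∧
    (c.r u w = 1 → c.r w v = 1 → c.r u v = 1)) ∧
  -- (C7)
  (∀ u v, u ≠ v → c.delta u v u = 1 ∧ c.delta u v v = 1 ∧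
    ((c.A u v = 1 ∨ c.r u v = 0) → ∑ w, c.delta u v w = 2) ∧
    (c.A u v = 0 → c.r u v = 1 → 2 < ∑ w, c.delta u v w)) ∧
  -- (C8)
  (∀ u v w, u ≠ v → v ≠ w → u ≠ w →
    (c.delta u v w = 1 → c.d u v = c.d u w + c.d w v) ∧
    (c.r u w = 1 → c.r w v = 1 → c.delta u v w = 0 → c.d u v < c.d u w + c.d w v))

/-- The edge relation of the digraph whose adjacency matrix is `B` :
edge `u → v` exists iff `u ≠ v` and `B u v = 1`. -/
def edgeRel {n : ℕ} (B : Fin n → Fin n → ℕ) : Fin n → Fin n → Prop :=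
  fun u v => u ≠ v ∧ B u v = 1

/-- `B` is the adjacency matrix of a digraph on `[n]` with existing node set
`{0,…,n1−1}` for some `n0 ≤ n1 ≤ n`, all edges joining distinct existing nodes. -/
def IsAdjMatrix (n0 n : ℕ) (B : Fin n → Fin n → ℕ) : Prop :=
  (∀ u v, B u v = 0 ∨ B u v = 1) ∧
  (∃ n1, n0 ≤ n1 ∧ n1 ≤ n ∧ ∀ v : Fin n, (B v v = 1 ↔ (v : ℕ) < n1)) ∧
  (∀ u v, u ≠ v → B u v = 1 → B u u = 1 ∧ B v v = 1)

section Walks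
variable {V : Type*} {E : V → V → Prop}

/-- ℕ-indexed version of `HasWalk`, easier to manipulate. -/
def HasWalkN (E : V → V → Prop) (k : ℕ) (u v : V) : Prop :=
  ∃ f : ℕ → V, f 0 = u ∧ f k = v ∧ ∀ i < k, E (f i) (f (i + 1))

lemma hasWalk_iff_N {k : ℕ} {u v : V} : HasWalk E k u v ↔ HasWalkN E k u v := by
  constructor
  · rintro ⟨f, h0, hl, he⟩
    refine ⟨fun i => f ⟨min i k, by omega⟩, ?_, ?_, ?_⟩
    · rw [← h0]; apply congrArg; simp [Fin.ext_iff]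
    · rw [← hl]; apply congrArg; simp [Fin.ext_iff, Fin.last]
    · intro i hi
      have := he ⟨i, hi⟩
      convert this using 2 <;> simp [Fin.ext_iff, Fin.castSucc, Fin.succ] <;> omega
  · rintro ⟨f, h0, hl, he⟩
    refine ⟨fun i => f i, by simpa using h0, by simpa using hl, fun i => ?_⟩
    have := he i i.isLt
    simpa using this

lemma hasWalkN_zero {u v : V} : HasWalkN E 0 u v ↔ u = v := by
  constructor
  · rintro ⟨f, h0, hl, _⟩; rw [← h0, hl]
  · rintro rfl; exact ⟨fun _ => u, rfl, rfl, by omega⟩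

lemma hasWalkN_one {u v : V} : HasWalkN E 1 u v ↔ E u v := by
  constructor
  · rintro ⟨f, h0, hl, he⟩
    have := he 0 (by omega)
    rwa [h0, hl] at this
  · intro h
    refine ⟨fun i => if i = 0 then u else v, by simp, by simp, ?_⟩
    intro i hi
    have : i = 0 := by omega
    simp [this, h]

lemma HasWalkN.trans {k l : ℕ} {u w v : V} (h1 : HasWalkN E k u w)
    (h2 : HasWalkN E l w v) : HasWalkN E (k + l) u v := by
  obtain ⟨f, f0, fk, fe⟩ := h1
  obtain ⟨g, g0, gl, ge⟩ := h2
  refine ⟨fun i => if i ≤ k then f i else g (i - k), by simp [f0], ?_, ?_⟩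
  · by_cases hl0 : l = 0
    · subst hl0; simpa using (by rw [fk, ← g0]; exact gl)
    · have h : ¬ (k + l ≤ k) := by omega
      simp only [h, if_false]
      rw [Nat.add_sub_cancel_left]; exact gl
  · intro i hi
    rcases lt_trichotomy i k with h | h | h
    · have h1' : i ≤ k := le_of_lt h
      have h2' : i + 1 ≤ k := h
      simpa [h1', h2'] using fe i h
    · subst h
      have hl1 : ¬ (i + 1 ≤ i) := by omega
      have : g (i + 1 - i) = g 1 := by congr 1; omega
      simp only [le_refl, if_true, hl1, if_false, this, fk, ← g0]
      exact ge 0 (by omega)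
    · have h1' : ¬ (i ≤ k) := by omega
      have h2' : ¬ (i + 1 ≤ k) := by omega
      have e : i + 1 - k = (i - k) + 1 := by omega
      simp only [h1', h2', if_false, e]
      exact ge (i - k) (by omega)

lemma HasWalkN.split {k : ℕ} {u v : V} (h : HasWalkN E k u v) (j : ℕ) (hj : j ≤ k) :
    ∃ w, HasWalkN E j u w ∧ HasWalkN E (k - j) w v := by
  obtain ⟨f, f0, fk, fe⟩ := h
  refine ⟨f j, ⟨f, f0, rfl, fun i hi => fe i (by omega)⟩,
    ⟨fun i => f (j + i), rfl, ?_, fun i hi => ?_⟩⟩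
  · show f (j + (k - j)) = v
    rw [Nat.add_sub_cancel' hj]; exact fk
  · have := fe (j + i) (by omega)
    have e : j + (i + 1) = j + i + 1 := by omega
    show E (f (j + i)) (f (j + (i + 1)))
    rw [e]; exact this

lemma splice {k : ℕ} {u v : V} {f : ℕ → V} (f0 : f 0 = u) (fk : f k = v)
    (fe : ∀ i < k, E (f i) (f (i + 1))) {a b : ℕ} (hab : a < b) (hbk : b ≤ k)
    (heq : f a = f b) : HasWalkN E (k - (b - a)) u v := by
  refine ⟨fun m => if m ≤ a then f m else f (m + (b - a)), by simp [f0], ?_, ?_⟩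
  · show (if k - (b - a) ≤ a then f (k - (b - a)) else f (k - (b - a) + (b - a))) = v
    by_cases h : k - (b - a) ≤ a
    · rw [if_pos h, show k - (b - a) = a from by omega, heq,
        show b = k from by omega, fk]
    · rw [if_neg h, show k - (b - a) + (b - a) = k from by omega, fk]
  · intro m hm
    show E (if m ≤ a then f m else f (m + (b - a)))
      (if m + 1 ≤ a then f (m + 1) else f (m + 1 + (b - a)))
    by_cases h1 : m + 1 ≤ a
    · have h2 : m ≤ a := by omega
      simp only [h2, if_true, h1, if_true]
      exact fe m (by omega)
    · by_cases h2 : m ≤ a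
      · have hma : m = a := by omega
        have e : m + 1 + (b - a) = b + 1 := by omega
        rw [if_pos h2, if_neg h1, e, hma, heq]
        exact fe b (by omega)
      · simp only [h2, if_false, h1, if_false]
        have e : m + 1 + (b - a) = m + (b - a) + 1 := by omega
        rw [e]
        exact fe (m + (b - a)) (by omega)

lemma hasWalkN_shorter [Fintype V] {u v : V} (k : ℕ) (h : HasWalkN E k u v)
    (hk : Fintype.card V ≤ k) : ∃ k' < k, HasWalkN E k' u v := by
  obtain ⟨f, f0, fk, fe⟩ := h
  have hcard : Fintype.card V < (Finset.range (k + 1)).card := by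
    simp; omega
  obtain ⟨a, ha, b, hb, hab, heq⟩ :=
    Finset.exists_ne_map_eq_of_card_lt_of_maps_to hcard
      (fun x _ => Finset.mem_univ (f x))
  simp only [Finset.mem_range] at ha hb
  rcases lt_trichotomy a b with h | h | h
  · exact ⟨k - (b - a), by omega, splice f0 fk fe h (by omega) heq⟩
  · exact absurd h hab
  · exact ⟨k - (a - b), by omega, splice f0 fk fe h (by omega) heq.symm⟩

lemma hasWalkN_small [Fintype V] {u v : V} :
    ∀ k, HasWalkN E k u v → ∃ k' < Fintype.card V, HasWalkN E k' u v := by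
  intro k
  induction k using Nat.strong_induction_on with
  | _ k ih =>
    intro h
    by_cases hk : k < Fintype.card V
    · exact ⟨k, hk, h⟩
    · obtain ⟨k', hk', h'⟩ := hasWalkN_shorter k h (by omega)
      exact ih k' hk' h'

end Walks
section Dist
variable {V : Type*} {E : V → V → Prop} {n : ℕ} {u v w : V}

lemma reaches_self (E : V → V → Prop) (v : V) : Reaches E v v :=
  ⟨0, hasWalk_iff_N.2 (hasWalkN_zero.2 rfl)⟩

lemma Reaches.trans (h1 : Reaches E u w) (h2 : Reaches E w v) : Reaches E u v := by
  obtain ⟨k, h1⟩ := h1; obtain ⟨l, h2⟩ := h2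
  exact ⟨k + l, hasWalk_iff_N.2 ((hasWalk_iff_N.1 h1).trans (hasWalk_iff_N.1 h2))⟩

lemma reaches_of_edge (h : E u v) : Reaches E u v :=
  ⟨1, hasWalk_iff_N.2 (hasWalkN_one.2 h)⟩

lemma distG_self (E : V → V → Prop) (n : ℕ) (v : V) : distG E n v v = 0 := by
  rw [distG, if_pos (reaches_self E v)]
  exact Nat.eq_zero_of_le_zero (Nat.sInf_le (hasWalk_iff_N.2 (hasWalkN_zero.2 rfl)))

lemma distG_le {k : ℕ} (h : HasWalkN E k u v) : distG E n u v ≤ k := by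
  rw [distG, if_pos ⟨k, hasWalk_iff_N.2 h⟩]
  exact Nat.sInf_le (hasWalk_iff_N.2 h)

lemma Reaches.hasWalkN_distG (h : Reaches E u v) : HasWalkN E (distG E n u v) u v := by
  rw [distG, if_pos h]
  obtain ⟨k, hk⟩ := h
  exact hasWalk_iff_N.1 (Nat.sInf_mem (⟨k, hk⟩ : {k | HasWalk E k u v}.Nonempty))

lemma distG_of_not_reaches (h : ¬ Reaches E u v) : distG E n u v = n := by
  rw [distG, if_neg h]

lemma distG_lt_of_reaches [Fintype V] (hcard : Fintype.card V ≤ n)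
    (h : Reaches E u v) : distG E n u v < n := by
  obtain ⟨k, hk⟩ := h
  obtain ⟨k', hk', hw⟩ := hasWalkN_small k (hasWalk_iff_N.1 hk)
  exact lt_of_le_of_lt (distG_le hw) (lt_of_lt_of_le hk' hcard)

lemma distG_pos (huv : u ≠ v) : 1 ≤ distG E n u v ∨ distG E n u v = n := by
  by_cases h : Reaches E u v
  · left
    rcases Nat.eq_zero_or_pos (distG E n u v) with h0 | h0
    · exact absurd (hasWalkN_zero.1 (by rw [← h0] at *; exact h.hasWalkN_distG)) huv
    · exact h0
  · right; exact distG_of_not_reaches h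

lemma distG_pos_of_reaches (huv : u ≠ v) (h : Reaches E u v) : 1 ≤ distG E n u v := by
  rcases Nat.eq_zero_or_pos (distG E n u v) with h0 | h0
  · have := h.hasWalkN_distG (n := n)
    rw [h0] at this
    exact absurd (hasWalkN_zero.1 this) huv
  · exact h0

lemma distG_edge (huv : u ≠ v) (h : E u v) : distG E n u v = 1 :=
  le_antisymm (distG_le (hasWalkN_one.2 h))
    (distG_pos_of_reaches huv (reaches_of_edge h))

lemma edge_of_distG_one (h : Reaches E u v) (h1 : distG E n u v = 1) : E u v := by
  have := h.hasWalkN_distG (n := n)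
  rw [h1] at this
  exact hasWalkN_one.1 this

lemma distG_triangle (h1 : Reaches E u w) (h2 : Reaches E w v) :
    distG E n u v ≤ distG E n u w + distG E n w v :=
  distG_le (h1.hasWalkN_distG.trans h2.hasWalkN_distG)

/-- Midpoint extraction from a shortest walk of length ≥ 2. -/
lemma exists_mid (huv : u ≠ v) (hr : Reaches E u v) (h2 : 2 ≤ distG E n u v) :
    ∃ w, w ≠ u ∧ w ≠ v ∧ E u w ∧ Reaches E w v ∧
      distG E n u w = 1 ∧ distG E n w v = distG E n u v - 1 := by
  obtain ⟨w, h1w, hwv⟩ := (hr.hasWalkN_distG (n := n)).split 1 (by omega)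
  have hE : E u w := hasWalkN_one.1 h1w
  have hRwv : Reaches E w v := ⟨_, hasWalk_iff_N.2 hwv⟩
  have hwu : w ≠ u := by
    intro h
    rw [h] at hwv
    have := distG_le (n := n) hwv
    omega
  have hwv' : w ≠ v := by
    intro h
    rw [h] at hE
    have := distG_le (n := n) (hasWalkN_one.2 hE)
    omega
  have hle : distG E n w v ≤ distG E n u v - 1 := distG_le hwv
  have htri := distG_triangle (n := n) (reaches_of_edge hE) hRwv
  have h1 : distG E n u w = 1 := distG_edge (Ne.symm hwu) hE
  exact ⟨w, hwu, hwv', hE, hRwv, h1, by omega⟩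

end Dist
section Unique

lemma exists_third {n : ℕ} {u v : Fin n} (huv : u ≠ v) (f : Fin n → ℕ)
    (hbin : ∀ w, f w = 0 ∨ f w = 1) (hsum : 2 < ∑ w, f w) :
    ∃ w, w ≠ u ∧ w ≠ v ∧ f w = 1 := by
  by_contra hcon
  push_neg at hcon
  have hz : ∀ x ∈ Finset.univ, x ∉ ({u, v} : Finset (Fin n)) → f x = 0 := by
    intro x _ hx
    simp only [Finset.mem_insert, Finset.mem_singleton, not_or] at hx
    rcases hbin x with h | h
    · exact h
    · exact absurd h (hcon x hx.1 hx.2)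
  have h1 : ∑ x ∈ ({u, v} : Finset (Fin n)), f x = ∑ w, f w :=
    Finset.sum_subset (Finset.subset_univ _) hz
  rw [Finset.sum_pair huv] at h1
  have hu : f u ≤ 1 := by rcases hbin u with h | h <;> omega
  have hv : f v ≤ 1 := by rcases hbin v with h | h <;> omega
  omega

variable {n0 n : ℕ} {c : Candidate n}

lemma feasible_d_pos (hc : Feasible n0 n c) {u v : Fin n} (huv : u ≠ v) :
    1 ≤ c.d u v := by
  obtain ⟨hA, -, -, -, -, -, -, -, hC4, -⟩ := hc
  rcases hA u v with h | h
  · have := (hC4 u v huv).2 h; omega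
  · have := ((hC4 u v huv).1 h).2; omega

lemma feasible_walk_r (hc : Feasible n0 n c) :
    ∀ k (u v : Fin n), HasWalkN (edgeRel c.A) k u v → c.r u v = 1 := by
  obtain ⟨hA, hr, hd, hdel, hC1a, hC1b, hC2, hC3, hC4, hC5, hC6, hC7, hC8⟩ := hc
  intro k
  induction k with
  | zero =>
    intro u v h
    rw [← hasWalkN_zero.1 h]
    exact (hC3 u).1
  | succ k ih =>
    intro u v h
    obtain ⟨w, h1, h2⟩ := h.split 1 (by omega)
    rw [Nat.succ_sub_one] at h2
    obtain ⟨huw, hAuw⟩ := hasWalkN_one.1 h1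
    have hrwv : c.r w v = 1 := ih w v h2
    have hruw : c.r u w = 1 := ((hC4 u w huw).1 hAuw).1
    by_cases huv : u = v
    · subst huv; exact (hC3 u).1
    · by_cases hwv : w = v
      · subst hwv; exact hruw
      · exact (hC6 u v w huv (Ne.symm hwv) huw).2 hruw hrwv

lemma feasible_reaches_of_r (hc : Feasible n0 n c) :
    ∀ m (u v : Fin n), c.d u v = m → c.r u v = 1 →
      HasWalkN (edgeRel c.A) m u v := by
  intro m
  induction m using Nat.strong_induction_on with
  | _ m ih =>
    intro u v hdm hr
    obtain ⟨hA, hrb, hd, hdel, hC1a, hC1b, hC2, hC3, hC4, hC5, hC6, hC7, hC8⟩ := id hc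
    by_cases huv : u = v
    · subst huv
      have h0 : c.d u u = 0 := (hC3 u).2.1
      rw [h0] at hdm
      subst hdm
      exact hasWalkN_zero.2 rfl
    · rcases hA u v with h0 | h1
      · have hsum := (hC7 u v huv).2.2.2 h0 hr
        obtain ⟨w, hwu, hwv, hδ⟩ := exists_third huv (c.delta u v) (hdel u v) hsum
        obtain ⟨hruw, hrwv⟩ := (hC6 u v w huv (Ne.symm hwv) (Ne.symm hwu)).1 hδ
        have heq : c.d u v = c.d u w + c.d w v :=
          (hC8 u v w huv (Ne.symm hwv) (Ne.symm hwu)).1 hδ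
        have p1 : 1 ≤ c.d u w := feasible_d_pos hc (Ne.symm hwu)
        have p2 : 1 ≤ c.d w v := feasible_d_pos hc hwv
        have w1 := ih (c.d u w) (by omega) u w rfl hruw
        have w2 := ih (c.d w v) (by omega) w v rfl hrwv
        have := w1.trans w2
        rwa [← heq, hdm] at this
      · have hd1 : c.d u v = 1 := ((hC4 u v huv).1 h1).2
        rw [hd1] at hdm
        subst hdm
        exact hasWalkN_one.2 ⟨huv, h1⟩

lemma feasible_r_iff (hc : Feasible n0 n c) (u v : Fin n) :
    c.r u v = 1 ↔ Reaches (edgeRel c.A) u v := by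
  constructor
  · intro h
    exact ⟨c.d u v, hasWalk_iff_N.2 (feasible_reaches_of_r hc _ u v rfl h)⟩
  · rintro ⟨k, hk⟩
    exact feasible_walk_r hc k u v (hasWalk_iff_N.1 hk)

lemma feasible_d_le (hc : Feasible n0 n c) :
    ∀ m (u v : Fin n), Reaches (edgeRel c.A) u v →
      distG (edgeRel c.A) n u v = m → c.d u v ≤ m := by
  intro m
  induction m using Nat.strong_induction_on with
  | _ m ih =>
    intro u v hR hdm
    by_cases huv : u = v
    · subst huv
      have : c.d u u = 0 := hc.2.2.2.2.2.2.2.1 u |>.2.1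
      omega
    · have hm1 : 1 ≤ m := by
        rw [← hdm]; exact distG_pos_of_reaches huv hR
      by_cases hm : m = 1
      · subst hm
        have hE : edgeRel c.A u v := edge_of_distG_one hR hdm
        obtain ⟨hA, hrb, hd, hdel, hC1a, hC1b, hC2, hC3, hC4, hC5, hC6, hC7, hC8⟩ := hc
        have := ((hC4 u v huv).1 hE.2).2
        omega
      · obtain ⟨w, hwu, hwv, hE, hRwv, hd1, hd2⟩ :=
          exists_mid (n := n) huv hR (by omega)
        rw [hdm] at hd2
        have hruw : c.r u w = 1 :=
          (feasible_r_iff hc u w).2 (reaches_of_edge hE)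
        have hrwv : c.r w v = 1 := (feasible_r_iff hc w v).2 hRwv
        have hduw : c.d u w ≤ 1 := ih 1 (by omega) u w (reaches_of_edge hE) hd1
        have hdwv : c.d w v ≤ m - 1 := ih (m - 1) (by omega) w v hRwv hd2
        obtain ⟨hA, hrb, hd, hdel, hC1a, hC1b, hC2, hC3, hC4, hC5, hC6, hC7, hC8⟩ := hc
        have hle : c.d u v ≤ c.d u w + c.d w v := by
          rcases hdel u v w with h0 | h1
          · have := (hC8 u v w huv (Ne.symm hwv) (Ne.symm hwu)).2 hruw hrwv h0
            omega
          · have := (hC8 u v w huv (Ne.symm hwv) (Ne.symm hwu)).1 h1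
            omega
        omega

lemma feasible_d_eq (hc : Feasible n0 n c) (u v : Fin n) :
    c.d u v = distG (edgeRel c.A) n u v := by
  by_cases hR : Reaches (edgeRel c.A) u v
  · have h1 : distG (edgeRel c.A) n u v ≤ c.d u v := by
      have hr : c.r u v = 1 := (feasible_r_iff hc u v).2 hR
      exact distG_le (feasible_reaches_of_r hc _ u v rfl hr)
    have h2 : c.d u v ≤ distG (edgeRel c.A) n u v :=
      feasible_d_le hc _ u v hR rfl
    omega
  · have huv : u ≠ v := by rintro rfl; exact hR (reaches_self _ _)
    have hr0 : c.r u v ≠ 1 := fun h => hR ((feasible_r_iff hc u v).1 h)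
    obtain ⟨hA, hrb, hd, hdel, hC1a, hC1b, hC2, hC3, hC4, hC5, hC6, hC7, hC8⟩ := hc
    have hnd : ¬ (c.d u v < n) := fun h => hr0 ((hC5 u v huv).1 h)
    have := hd u v
    rw [distG_of_not_reaches hR]
    omega

lemma feasible_r_eq (hc : Feasible n0 n c) (u v : Fin n) :
    c.r u v = rG (edgeRel c.A) u v := by
  rw [rG]
  by_cases hR : Reaches (edgeRel c.A) u v
  · rw [if_pos hR]
    exact (feasible_r_iff hc u v).2 hR
  · rw [if_neg hR]
    have : c.r u v ≠ 1 := fun h => hR ((feasible_r_iff hc u v).1 h)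
    rcases hc.2.1 u v with h | h
    · exact h
    · exact absurd h this

lemma feasible_delta_eq (hc : Feasible n0 n c) (u v w : Fin n) :
    c.delta u v w = deltaG (edgeRel c.A) n u v w := by
  rw [deltaG]
  by_cases huv : u = v
  · have hC3 := hc.2.2.2.2.2.2.2.1
    subst huv
    rw [if_pos rfl]
    by_cases hwv : w = u
    · subst hwv; rw [if_pos rfl]; exact (hC3 w).2.2.1
    · rw [if_neg hwv]; exact (hC3 u).2.2.2 w hwv
  · rw [if_neg huv]
    by_cases hw : w = u ∨ w = v
    · rw [if_pos hw]
      rcases hw with rfl | rfl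
      · exact (hc.2.2.2.2.2.2.2.2.2.2.2.1 w v huv).1
      · exact (hc.2.2.2.2.2.2.2.2.2.2.2.1 u w huv).2.1
    · rw [if_neg hw]
      push_neg at hw
      obtain ⟨hwu, hwv⟩ := hw
      have hiff : c.delta u v w = 1 ↔
          (Reaches (edgeRel c.A) u w ∧ Reaches (edgeRel c.A) w v ∧
            distG (edgeRel c.A) n u w + distG (edgeRel c.A) n w v =
              distG (edgeRel c.A) n u v) := by
        constructor
        · intro hδ
          obtain ⟨hruw, hrwv⟩ :=
            (hc.2.2.2.2.2.2.2.2.2.2.1 u v w huv (Ne.symm hwv) (Ne.symm hwu)).1 hδ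
          have heq := (hc.2.2.2.2.2.2.2.2.2.2.2.2 u v w huv (Ne.symm hwv) (Ne.symm hwu)).1 hδ
          refine ⟨(feasible_r_iff hc u w).1 hruw, (feasible_r_iff hc w v).1 hrwv, ?_⟩
          rw [← feasible_d_eq hc, ← feasible_d_eq hc, ← feasible_d_eq hc, heq]
        · rintro ⟨hRuw, hRwv, hsum⟩
          have hruw := (feasible_r_iff hc u w).2 hRuw
          have hrwv := (feasible_r_iff hc w v).2 hRwv
          by_contra hne
          have h0 : c.delta u v w = 0 := by
            rcases hc.2.2.2.1 u v w with h | h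
            · exact h
            · exact absurd h hne
          have hlt := (hc.2.2.2.2.2.2.2.2.2.2.2.2 u v w huv (Ne.symm hwv) (Ne.symm hwu)).2
            hruw hrwv h0
          rw [feasible_d_eq hc, feasible_d_eq hc, feasible_d_eq hc, hsum] at hlt
          omega
      split
      · next hcond => exact hiff.2 hcond
      · next hcond =>
        rcases hc.2.2.2.1 u v w with h | h
        · exact h
        · exact absurd (hiff.1 h) hcond

end Unique
section Adj

lemma card_filter_lt (n n1 : ℕ) (h : n1 ≤ n) :
    (Finset.univ.filter (fun v : Fin n => (v : ℕ) < n1)).card = n1 := by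
  apply Finset.card_eq_of_bijective (fun i hi => (⟨i, lt_of_lt_of_le hi h⟩ : Fin n))
  · intro v hv
    simp only [Finset.mem_filter, Finset.mem_univ, true_and] at hv
    exact ⟨v, hv, by simp⟩
  · intro i hi
    simp only [Finset.mem_filter, Finset.mem_univ, true_and]
    exact hi
  · intro i j hi hj hij
    simpa [Fin.ext_iff] using hij

lemma sum_binary_eq_card {n : ℕ} (f : Fin n → ℕ) (hf : ∀ v, f v = 0 ∨ f v = 1) :
    ∑ v, f v = (Finset.univ.filter (fun v => f v = 1)).card := by
  rw [Finset.card_filter]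
  apply Finset.sum_congr rfl
  intro v _
  rcases hf v with h | h <;> simp [h]

variable {n0 n : ℕ} {c : Candidate n}

lemma feasible_diag_mono (hc : Feasible n0 n c) (v w : Fin n) (hvw : (v : ℕ) ≤ (w : ℕ)) :
    c.A w w ≤ c.A v v := by
  have aux : ∀ b (hb : b < n), (v : ℕ) ≤ b → c.A ⟨b, hb⟩ ⟨b, hb⟩ ≤ c.A v v := by
    intro b
    induction b with
    | zero =>
      intro hb h0
      have hv0 : v = ⟨0, hb⟩ := by apply Fin.ext; show (v : ℕ) = 0; omega
      rw [hv0]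
    | succ b ihb =>
      intro hb hvb
      by_cases hcase : (v : ℕ) = b + 1
      · have : v = ⟨b + 1, hb⟩ := by apply Fin.ext; show (v : ℕ) = b + 1; omega
        rw [this]
      · have hb' : b < n := by omega
        have step := hc.2.2.2.2.2.1 ⟨b, hb'⟩ hb
        exact le_trans step (ihb hb' (by omega))
  have := aux (w : ℕ) w.isLt hvw
  simpa using this

lemma feasible_isAdj (hc : Feasible n0 n c) : IsAdjMatrix n0 n c.A := by
  obtain ⟨hA, hrb, hd, hdel, hC1a, hC1b, hC2, hC3, hC4, hC5, hC6, hC7, hC8⟩ := id hc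
  refine ⟨hA, ?_, ?_⟩
  · set S := Finset.univ.filter (fun v : Fin n => c.A v v = 1) with hS
    refine ⟨S.card, ?_, ?_, ?_⟩
    · have hsum := sum_binary_eq_card (fun v => c.A v v) (fun v => hA v v)
      rw [hsum] at hC1a
      exact hC1a
    · exact le_trans (Finset.card_filter_le _ _) (by simp)
    · intro v
      constructor
      · intro hv
        have hsub : Finset.univ.filter (fun w : Fin n => (w : ℕ) < (v : ℕ) + 1) ⊆ S := by
          intro w hw
          simp only [hS, Finset.mem_filter, Finset.mem_univ, true_and] at hw ⊢
          have hmono := feasible_diag_mono hc w v (by omega)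
          rcases hA w w with h | h
          · rw [hv] at hmono; omega
          · exact h
        have hcard := Finset.card_le_card hsub
        rw [card_filter_lt n ((v : ℕ) + 1) v.isLt] at hcard
        omega
      · intro hv
        by_contra hne
        have h0 : c.A v v = 0 := by rcases hA v v with h | h; exact h; exact absurd h hne
        have hsub : S ⊆ Finset.univ.filter (fun w : Fin n => (w : ℕ) < (v : ℕ)) := by
          intro w hw
          simp only [hS, Finset.mem_filter, Finset.mem_univ, true_and] at hw ⊢
          by_contra hge
          have hmono := feasible_diag_mono hc v w (by omega)
          omega
        have hcard := Finset.card_le_card hsub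
        rw [card_filter_lt n (v : ℕ) (le_of_lt v.isLt)] at hcard
        omega
  · intro u v huv h1
    by_contra hcon
    have hdisj : c.A u u = 0 ∨ c.A v v = 0 := by
      rcases hA u u with h | h
      · left; exact h
      · rcases hA v v with h' | h'
        · right; exact h'
        · exact absurd ⟨h, h'⟩ hcon
    have := (hC2 u v huv hdisj).1
    omega

end Adj
section Surj

lemma sum_eq_two {n : ℕ} {u v : Fin n} (huv : u ≠ v) (f : Fin n → ℕ)
    (hu : f u = 1) (hv : f v = 1) (hz : ∀ w, w ≠ u → w ≠ v → f w = 0) :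
    ∑ w, f w = 2 := by
  have h1 : ∑ x ∈ ({u, v} : Finset (Fin n)), f x = ∑ w, f w :=
    Finset.sum_subset (Finset.subset_univ _) (by
      intro x _ hx
      simp only [Finset.mem_insert, Finset.mem_singleton, not_or] at hx
      exact hz x hx.1 hx.2)
  rw [Finset.sum_pair huv, hu, hv] at h1
  omega

lemma sum_ge_three {n : ℕ} {u v w : Fin n} (huv : u ≠ v) (hwu : w ≠ u) (hwv : w ≠ v)
    (f : Fin n → ℕ) (hu : f u = 1) (hv : f v = 1) (hw : f w = 1) :
    2 < ∑ x, f x := by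
  have hle := Finset.sum_le_sum_of_subset
    (Finset.subset_univ ({u, v, w} : Finset (Fin n))) (f := f)
  have h3 : ∑ x ∈ ({u, v, w} : Finset (Fin n)), f x = 3 := by
    rw [Finset.sum_insert (by simp [huv, Ne.symm hwu]),
      Finset.sum_insert (by simp [Ne.symm hwv]), Finset.sum_singleton, hu, hv, hw]
    rfl
  omega

lemma isAdj_feasible {n0 n : ℕ} (h2 : 2 ≤ n0) (hn : n0 ≤ n) {B : Fin n → Fin n → ℕ}
    (hB : IsAdjMatrix n0 n B) :
    Feasible n0 n ⟨B, rG (edgeRel B), distG (edgeRel B) n, deltaG (edgeRel B) n⟩ := by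
  obtain ⟨hbin, ⟨n1, hn01, hn1n, hdiag⟩, hnode⟩ := hB
  set E := edgeRel B with hEdef
  have hn2 : 2 ≤ n := le_trans h2 hn
  have hcard : Fintype.card (Fin n) ≤ n := by simp
  have rG_bin : ∀ u v : Fin n, rG E u v = 0 ∨ rG E u v = 1 := by
    intro u v; rw [rG]; split
    · right; rfl
    · left; rfl
  have rG_one : ∀ u v : Fin n, rG E u v = 1 ↔ Reaches E u v := by
    intro u v; rw [rG]; split
    · next h => simp [h]
    · next h => simp [h]
  have δ_bin : ∀ u v w : Fin n, deltaG E n u v w = 0 ∨ deltaG E n u v w = 1 := by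
    intro u v w; rw [deltaG]
    split
    · split
      · right; rfl
      · left; rfl
    · split
      · right; rfl
      · split
        · right; rfl
        · left; rfl
  have dpos : ∀ u v : Fin n, u ≠ v → 1 ≤ distG E n u v := by
    intro u v huv
    by_cases h : Reaches E u v
    · exact distG_pos_of_reaches huv h
    · rw [distG_of_not_reaches h]; omega
  -- the no-edge, reachable midpoint fact
  have hmid : ∀ u v : Fin n, u ≠ v → B u v = 0 → rG E u v = 1 →
      ∃ w, w ≠ u ∧ w ≠ v ∧ deltaG E n u v w = 1 := by
    intro u v huv hB0 hr
    have hR : Reaches E u v := (rG_one u v).1 hr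
    have hge2 : 2 ≤ distG E n u v := by
      have h1 := dpos u v huv
      rcases Nat.lt_or_ge (distG E n u v) 2 with h | h
      · have hd1 : distG E n u v = 1 := by omega
        have hE1 : E u v := edge_of_distG_one hR hd1
        rw [hEdef] at hE1
        have := hE1.2
        omega
      · exact h
    obtain ⟨w, hwu, hwv, hEuw, hRwv, hd1, hd2⟩ := exists_mid (n := n) huv hR hge2
    refine ⟨w, hwu, hwv, ?_⟩
    rw [deltaG, if_neg huv, if_neg (by push_neg; exact ⟨hwu, hwv⟩)]
    rw [if_pos ⟨reaches_of_edge hEuw, hRwv, by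
      rw [hd1, hd2]
      omega⟩]
  refine ⟨hbin, rG_bin, ?_, δ_bin, ?_, ?_, ?_, ?_, ?_, ?_, ?_, ?_, ?_⟩ <;> dsimp only
  -- d ≤ n
  · intro u v
    by_cases h : Reaches E u v
    · exact le_of_lt (distG_lt_of_reaches hcard h)
    · rw [distG_of_not_reaches h]
  -- C1a
  · have hBv : ∀ v : Fin n, B v v = (if (v : ℕ) < n1 then 1 else 0) := by
      intro v
      by_cases h : (v : ℕ) < n1
      · rw [if_pos h]; exact (hdiag v).2 h
      · rw [if_neg h]
        rcases hbin v v with h0 | h1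
        · exact h0
        · exact absurd ((hdiag v).1 h1) h
    calc n0 ≤ n1 := hn01
      _ = (Finset.univ.filter (fun v : Fin n => (v : ℕ) < n1)).card :=
          (card_filter_lt n n1 hn1n).symm
      _ = ∑ v : Fin n, (if (v : ℕ) < n1 then 1 else 0) := Finset.card_filter _ _
      _ = ∑ v : Fin n, B v v := by
          apply Finset.sum_congr rfl
          intro v _
          exact (hBv v).symm
  -- C1b
  · intro v h
    by_cases hlt : (v : ℕ) + 1 < n1
    · have h1 : B v v = 1 := (hdiag v).2 (by omega)
      rw [h1]
      rcases hbin ⟨(v : ℕ) + 1, h⟩ ⟨(v : ℕ) + 1, h⟩ with h0 | h0 <;> omega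
    · have h0 : B ⟨(v : ℕ) + 1, h⟩ ⟨(v : ℕ) + 1, h⟩ = 0 := by
        rcases hbin ⟨(v : ℕ) + 1, h⟩ ⟨(v : ℕ) + 1, h⟩ with h0 | h0
        · exact h0
        · exact absurd ((hdiag _).1 h0) hlt
      rw [h0]
      omega
  -- C2
  · intro u v huv hdisj
    have hA0 : B u v = 0 := by
      rcases hbin u v with h | h
      · exact h
      · obtain ⟨hz1, hz2⟩ := hnode u v huv h
        rcases hdisj with h' | h' <;> omega
    have hnR : ¬ Reaches E u v := by
      rintro ⟨k, hk⟩
      obtain ⟨f, f0, fk, fe⟩ := hasWalk_iff_N.1 hk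
      have hk0 : k ≠ 0 := by
        rintro rfl
        exact huv (by rw [← f0, ← fk])
      have e1 := fe 0 (by omega)
      rw [f0] at e1
      obtain ⟨hx1, hx2⟩ := hnode u (f 1) e1.1 e1.2
      have e2 := fe (k - 1) (by omega)
      have hfk : f (k - 1 + 1) = v := by
        rw [show k - 1 + 1 = k from by omega, fk]
      rw [hfk] at e2
      obtain ⟨hy1, hy2⟩ := hnode (f (k - 1)) v e2.1 e2.2
      rcases hdisj with h' | h'
      · omega
      · omega
    refine ⟨hA0, ?_, distG_of_not_reaches hnR⟩
    rw [rG, if_neg hnR]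
  -- C3
  · intro v
    refine ⟨?_, distG_self E n v, ?_, ?_⟩
    · rw [rG, if_pos (reaches_self E v)]
    · rw [deltaG, if_pos rfl, if_pos rfl]
    · intro w hw
      rw [deltaG, if_pos rfl, if_neg hw]
  -- C4
  · intro u v huv
    constructor
    · intro h1
      have hE1 : E u v := ⟨huv, h1⟩
      exact ⟨(rG_one u v).2 (reaches_of_edge hE1), distG_edge huv hE1⟩
    · intro h0
      by_cases hR : Reaches E u v
      · have hd1 := dpos u v huv
        rcases Nat.lt_or_ge (distG E n u v) 2 with h | h
        · have : distG E n u v = 1 := by omega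
          have hE1 := edge_of_distG_one hR this
          rw [hEdef] at hE1
          have := hE1.2
          omega
        · exact h
      · rw [distG_of_not_reaches hR]; omega
  -- C5
  · intro u v huv
    rw [rG]
    by_cases hR : Reaches E u v
    · rw [if_pos hR]
      exact iff_of_true (distG_lt_of_reaches hcard hR) rfl
    · rw [if_neg hR, distG_of_not_reaches hR]
      constructor
      · omega
      · omega
  -- C6
  · intro u v w huv hvw huw
    constructor
    · intro hδ
      rw [deltaG, if_neg huv,
        if_neg (by push_neg; exact ⟨Ne.symm huw, Ne.symm hvw⟩)] at hδ
      by_cases hcond : (Reaches E u w ∧ Reaches E w v ∧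
          distG E n u w + distG E n w v = distG E n u v)
      · exact ⟨(rG_one u w).2 hcond.1, (rG_one w v).2 hcond.2.1⟩
      · rw [if_neg hcond] at hδ
        omega
    · intro h1 h2
      exact (rG_one u v).2 (((rG_one u w).1 h1).trans ((rG_one w v).1 h2))
  -- C7
  · intro u v huv
    refine ⟨?_, ?_, ?_, ?_⟩
    · rw [deltaG, if_neg huv, if_pos (Or.inl rfl)]
    · rw [deltaG, if_neg huv, if_pos (Or.inr rfl)]
    · intro hcase
      apply sum_eq_two huv
      · rw [deltaG, if_neg huv, if_pos (Or.inl rfl)]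
      · rw [deltaG, if_neg huv, if_pos (Or.inr rfl)]
      · intro w hwu hwv
        rw [deltaG, if_neg huv, if_neg (by push_neg; exact ⟨hwu, hwv⟩)]
        rcases hcase with h1 | h0
        · have hd1 : distG E n u v = 1 := distG_edge huv ⟨huv, h1⟩
          refine if_neg ?_
          rintro ⟨hR1, hR2, hsum⟩
          have p1 := dpos u w (Ne.symm hwu)
          have p2 := dpos w v hwv
          omega
        · have hnR : ¬ Reaches E u v := by
            intro hR
            rw [(rG_one u v).2 hR] at h0
            omega
          refine if_neg ?_
          rintro ⟨hR1, hR2, hsum⟩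
          exact hnR (hR1.trans hR2)
    · intro hA0 hr1
      obtain ⟨w, hwu, hwv, hδ⟩ := hmid u v huv hA0 hr1
      apply sum_ge_three huv hwu hwv
      · rw [deltaG, if_neg huv, if_pos (Or.inl rfl)]
      · rw [deltaG, if_neg huv, if_pos (Or.inr rfl)]
      · exact hδ
  -- C8
  · intro u v w huv hvw huw
    constructor
    · intro hδ
      rw [deltaG, if_neg huv,
        if_neg (by push_neg; exact ⟨Ne.symm huw, Ne.symm hvw⟩)] at hδ
      by_cases hcond : (Reaches E u w ∧ Reaches E w v ∧
          distG E n u w + distG E n w v = distG E n u v)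
      · exact hcond.2.2.symm
      · rw [if_neg hcond] at hδ
        omega
    · intro h1 h2 hδ
      have hR1 := (rG_one u w).1 h1
      have hR2 := (rG_one w v).1 h2
      have htri := distG_triangle (n := n) hR1 hR2
      have hne : distG E n u w + distG E n w v ≠ distG E n u v := by
        intro heq
        rw [deltaG, if_neg huv,
          if_neg (by push_neg; exact ⟨Ne.symm huw, Ne.symm hvw⟩),
          if_pos ⟨hR1, hR2, heq⟩] at hδ
        omega
      omega

end Surj
/-- For `2 ≤ n0 ≤ n`, the projection `(A, r, d, δ) ↦ A` is a bijection
from the set of candidate assignments satisfying the graph-encoding constraints (C1)–(C8)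
onto the set of adjacency matrices of digraphs on `[n]` with node number in `[n0, n]`. -/
theorem graph_encoding_bijection (n0 n : ℕ) (h2 : 2 ≤ n0) (hn : n0 ≤ n) :
    Set.BijOn (fun c : Candidate n => c.A)
      {c | Feasible n0 n c} {B | IsAdjMatrix n0 n B} := by
  refine ⟨fun c hc => feasible_isAdj hc, ?_, ?_⟩
  · intro c1 hc1 c2 hc2 hA
    simp only [Set.mem_setOf_eq] at hc1 hc2
    have hA' : c1.A = c2.A := hA
    have hr : c1.r = c2.r := by
      funext u v
      rw [feasible_r_eq hc1 u v, feasible_r_eq hc2 u v, hA']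
    have hd : c1.d = c2.d := by
      funext u v
      rw [feasible_d_eq hc1 u v, feasible_d_eq hc2 u v, hA']
    have hδ : c1.delta = c2.delta := by
      funext u v w
      rw [feasible_delta_eq hc1 u v w, feasible_delta_eq hc2 u v w, hA']
    obtain ⟨A1, r1, d1, δ1⟩ := c1
    obtain ⟨A2, r2, d2, δ2⟩ := c2
    simp only at hA' hr hd hδ
    simp only [Candidate.mk.injEq]
    exact ⟨hA', hr, hd, hδ⟩
  · intro B hB
    exact ⟨⟨B, rG (edgeRel B), distG (edgeRel B) n, deltaG (edgeRel B) n⟩,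
      isAdj_feasible h2 hn hB, rfl⟩
end

section
/- If a candidate assignment (A, r, d, δ) satisfies the graph-encoding constraints (C1)–(C8), and G is the digraph on [n] whose adjacency matrix equals A, then r = r(G), d = d(G), and δ = δ(G); that is, the reachability, shortest-distance, and shortest-path variables of any feasible solution coincide with the graph-derived values of the digraph determined by its adjacency component. -/
lemma hasWalk_zero {V : Type*} (E : V → V → Prop) (u v : V) :
    HasWalk E 0 u v ↔ u = v := by
  constructor
  · rintro ⟨f, h0, hl, _⟩
    rw [← h0, ← hl]
    congr 1
  · rintro rfl
    exact ⟨fun _ => u, rfl, rfl, fun i => i.elim0⟩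

lemma hasWalk_succ {V : Type*} (E : V → V → Prop) (k : ℕ) (u v : V) :
    HasWalk E (k + 1) u v ↔ ∃ w, E u w ∧ HasWalk E k w v := by
  constructor
  · rintro ⟨f, h0, hl, he⟩
    refine ⟨f 1, ?_, fun i => f i.succ, rfl, ?_, fun i => ?_⟩
    · have := he 0
      simpa [h0] using this
    · show f (Fin.last k).succ = v
      rw [Fin.succ_last, hl]
    · have := he i.succ
      rwa [← Fin.succ_castSucc] at this
  · rintro ⟨w, hw, g, h0, hl, he⟩
    refine ⟨Fin.cases u g, by simp, ?_, fun i => ?_⟩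
    · show Fin.cases u g (Fin.last (k + 1)) = v
      rw [← Fin.succ_last, Fin.cases_succ, hl]
    · induction i using Fin.cases with
      | zero =>
        show E (Fin.cases u g (Fin.castSucc 0)) (Fin.cases u g (Fin.succ 0))
        rw [Fin.castSucc_zero, Fin.cases_zero, Fin.cases_succ, h0]
        exact hw
      | succ j =>
        show E (Fin.cases u g (Fin.castSucc j.succ)) (Fin.cases u g (Fin.succ j.succ))
        rw [← Fin.succ_castSucc, Fin.cases_succ, Fin.cases_succ]
        exact he j

lemma hasWalk_trans {V : Type*} (E : V → V → Prop) :
    ∀ j k (u w v : V), HasWalk E j u w → HasWalk E k w v → HasWalk E (j + k) u v := by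
  intro j
  induction j with
  | zero =>
    intro k u w v h1 h2
    rw [hasWalk_zero] at h1
    subst h1
    simpa using h2
  | succ j ih =>
    intro k u w v h1 h2
    rw [hasWalk_succ] at h1
    obtain ⟨x, hx, h1⟩ := h1
    have h3 : HasWalk E (j + k + 1) u v := (hasWalk_succ ..).mpr ⟨x, hx, ih k x w v h1 h2⟩
    have : j + 1 + k = j + k + 1 := by omega
    rwa [this]

/-- If a candidate assignment `(A, r, d, δ)` satisfies the graph-encoding
constraints (C1)–(C8), and `G` is the digraph on `[n]` whose adjacency matrix equals `A`,
then `r = r(G)`, `d = d(G)` and `δ = δ(G)`. -/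
theorem feasible_vars_eq_graph_derived (n0 n : ℕ) (h2 : 2 ≤ n0) (hn : n0 ≤ n)
    (c : Candidate n) (hc : Feasible n0 n c) :
    (∀ u v, c.r u v = rG (edgeRel c.A) u v) ∧
    (∀ u v, c.d u v = distG (edgeRel c.A) n u v) ∧
    (∀ u v w, c.delta u v w = deltaG (edgeRel c.A) n u v w) := by
  obtain ⟨hA, hr, hdle, hdel, _, _, _, hC3, hC4, hC5, hC6, hC7, hC8⟩ := hc
  have hd1 : ∀ u v, u ≠ v → 1 ≤ c.d u v := by
    intro u v huv
    rcases hA u v with h | h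
    · have := (hC4 u v huv).2 h; omega
    · have := ((hC4 u v huv).1 h).2; omega
  have key1 : ∀ k u v, HasWalk (edgeRel c.A) k u v → c.r u v = 1 ∧ c.d u v ≤ k := by
    intro k
    induction k with
    | zero =>
      intro u v h
      rw [hasWalk_zero] at h; subst h
      exact ⟨(hC3 u).1, le_of_eq (hC3 u).2.1⟩
    | succ k ih =>
      intro u v h
      rw [hasWalk_succ] at h
      obtain ⟨w, ⟨huw, hAuw⟩, hwalk⟩ := h
      obtain ⟨hrwv, hdwv⟩ := ih w v hwalk
      have hduw : c.d u w = 1 := ((hC4 u w huw).1 hAuw).2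
      have hruw : c.r u w = 1 := ((hC4 u w huw).1 hAuw).1
      by_cases huv : u = v
      · subst huv
        exact ⟨(hC3 u).1, by rw [(hC3 u).2.1]; omega⟩
      · by_cases hwv : w = v
        · subst hwv
          exact ⟨hruw, by omega⟩
        · have hruv : c.r u v = 1 := (hC6 u v w huv (Ne.symm hwv) huw).2 hruw hrwv
          refine ⟨hruv, ?_⟩
          rcases hdel u v w with h0 | h1
          · have := (hC8 u v w huv (Ne.symm hwv) huw).2 hruw hrwv h0
            omega
          · have := (hC8 u v w huv (Ne.symm hwv) huw).1 h1
            omega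
  have hexw : ∀ u v, u ≠ v → c.A u v = 0 → c.r u v = 1 →
      ∃ w, w ≠ u ∧ w ≠ v ∧ c.delta u v w = 1 := by
    intro u v huv hA0 hr1
    by_contra hcon
    push_neg at hcon
    have hgt := (hC7 u v huv).2.2.2 hA0 hr1
    have hsub : ∑ w, c.delta u v w = ∑ w ∈ ({u, v} : Finset (Fin n)), c.delta u v w := by
      refine (Finset.sum_subset (Finset.subset_univ _) ?_).symm
      intro w _ hw
      simp only [Finset.mem_insert, Finset.mem_singleton, not_or] at hw
      rcases hdel u v w with h | h
      · exact h
      · exact absurd h (hcon w hw.1 hw.2)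
    rw [hsub, Finset.sum_pair huv, (hC7 u v huv).1, (hC7 u v huv).2.1] at hgt
    omega
  have key2 : ∀ m u v, u ≠ v → c.r u v = 1 → c.d u v ≤ m →
      ∃ k, k ≤ c.d u v ∧ HasWalk (edgeRel c.A) k u v := by
    intro m
    induction m with
    | zero =>
      intro u v huv _ hle
      have := hd1 u v huv
      omega
    | succ m ih =>
      intro u v huv hr1 hle
      rcases hA u v with h0 | h1
      · obtain ⟨w, hwu, hwv, hδ1⟩ := hexw u v huv h0 hr1
        have hrr := (hC6 u v w huv (Ne.symm hwv) (Ne.symm hwu)).1 hδ1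
        have hde := (hC8 u v w huv (Ne.symm hwv) (Ne.symm hwu)).1 hδ1
        have h1w := hd1 u w (Ne.symm hwu)
        have hwv1 := hd1 w v hwv
        obtain ⟨k1, hk1, hw1⟩ := ih u w (Ne.symm hwu) hrr.1 (by omega)
        obtain ⟨k2, hk2, hw2⟩ := ih w v hwv hrr.2 (by omega)
        exact ⟨k1 + k2, by omega, hasWalk_trans _ _ _ _ _ _ hw1 hw2⟩
      · refine ⟨1, ?_, ?_⟩
        · have := ((hC4 u v huv).1 h1).2; omega
        · rw [hasWalk_succ]
          exact ⟨v, ⟨huv, h1⟩, (hasWalk_zero _ _ _).mpr rfl⟩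
  have hreq : ∀ u v, c.r u v = 1 ↔ Reaches (edgeRel c.A) u v := by
    intro u v
    constructor
    · intro h1
      by_cases huv : u = v
      · exact ⟨0, (hasWalk_zero _ _ _).mpr huv⟩
      · obtain ⟨k, _, hw⟩ := key2 (c.d u v) u v huv h1 le_rfl
        exact ⟨k, hw⟩
    · rintro ⟨k, hw⟩
      exact (key1 k u v hw).1
  have hrpart : ∀ u v, c.r u v = rG (edgeRel c.A) u v := by
    intro u v
    unfold rG
    split
    next h => exact (hreq u v).mpr h
    next h =>
      rcases hr u v with h0 | h1
      · exact h0
      · exact absurd ((hreq u v).mp h1) h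
  have hdpart : ∀ u v, c.d u v = distG (edgeRel c.A) n u v := by
    intro u v
    unfold distG
    split
    next hR =>
      obtain ⟨k0, hw0⟩ := hR
      by_cases huv : u = v
      · subst huv
        rw [(hC3 u).2.1]
        symm
        rw [Nat.sInf_eq_zero]
        exact Or.inl ((hasWalk_zero _ _ _).mpr rfl)
      · have hr1 : c.r u v = 1 := (hreq u v).mpr ⟨k0, hw0⟩
        apply le_antisymm
        · refine le_csInf ⟨k0, hw0⟩ ?_
          intro k hk
          exact (key1 k u v hk).2
        · obtain ⟨k, hk, hw⟩ := key2 (c.d u v) u v huv hr1 le_rfl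
          exact le_trans (Nat.sInf_le hw) hk
    next hR =>
      have huv : u ≠ v := fun h => hR ⟨0, (hasWalk_zero _ _ _).mpr h⟩
      have hr0 : c.r u v = 0 := by
        rcases hr u v with h | h
        · exact h
        · exact absurd ((hreq u v).mp h) hR
      have hle := hdle u v
      have hnot : ¬ c.d u v < n := fun hlt => by
        have := (hC5 u v huv).mp hlt
        omega
      omega
  refine ⟨hrpart, hdpart, ?_⟩
  intro u v w
  unfold deltaG
  by_cases huv : u = v
  · subst huv
    rw [if_pos rfl]
    by_cases hwv : w = u
    · subst hwv
      rw [if_pos rfl]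
      exact (hC3 _).2.2.1
    · rw [if_neg hwv]
      exact (hC3 u).2.2.2 w hwv
  · rw [if_neg huv]
    by_cases hw : w = u ∨ w = v
    · rw [if_pos hw]
      rcases hw with rfl | rfl
      · exact (hC7 _ _ huv).1
      · exact (hC7 _ _ huv).2.1
    · rw [if_neg hw]
      push_neg at hw
      obtain ⟨hwu, hwv⟩ := hw
      split
      next hcond =>
        obtain ⟨h1, h2, h3⟩ := hcond
        have hruw : c.r u w = 1 := (hreq u w).mpr h1
        have hrwv : c.r w v = 1 := (hreq w v).mpr h2
        rcases hdel u v w with h0 | h1'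
        · exfalso
          have hlt := (hC8 u v w huv (Ne.symm hwv) (Ne.symm hwu)).2 hruw hrwv h0
          rw [hdpart u v, hdpart u w, hdpart w v] at hlt
          omega
        · exact h1'
      next hcond =>
        rcases hdel u v w with h0 | h1'
        · exact h0
        · exfalso
          apply hcond
          have hrr := (hC6 u v w huv (Ne.symm hwv) (Ne.symm hwu)).1 h1'
          have hde := (hC8 u v w huv (Ne.symm hwv) (Ne.symm hwu)).1 h1'
          refine ⟨(hreq u w).mp hrr.1, (hreq w v).mp hrr.2, ?_⟩
          rw [← hdpart, ← hdpart, ← hdpart]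
          omega
end

section
/- If a candidate assignment (A, r, d, δ) satisfies the graph-encoding constraints (C1)–(C8) and n1 = Σ_{v∈[n]} A(v,v), then A(v,v) = 1 for all v with v < n1 and A(v,v) = 0 for all v with v ≥ n1; moreover, for every pair u ≠ v with max(u,v) ≥ n1, the remaining variables are uniquely determined: A(u,v) = 0, r(u,v) = 0, d(u,v) = n, δ(u,v,u) = δ(u,v,v) = 1, and δ(u,v,w) = 0 for all w ∉ {u,v}. -/
/-- For a feasible candidate assignment with `n1 = Σ_v A(v,v)`, the nodes
`v < n1` exist and the nodes `v ≥ n1` do not; moreover for every pair `u ≠ v` with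
`max(u,v) ≥ n1` all remaining variables are uniquely determined: `A(u,v) = 0`,
`r(u,v) = 0`, `d(u,v) = n`, `δ(u,v,u) = δ(u,v,v) = 1` and `δ(u,v,w) = 0` for `w ∉ {u,v}`. -/
theorem feasible_nonexistent_determined (n0 n : ℕ) (h2 : 2 ≤ n0) (hn : n0 ≤ n)
    (c : Candidate n) (hc : Feasible n0 n c) (n1 : ℕ) (hn1 : n1 = ∑ v, c.A v v) :
    (∀ v : Fin n, ((v : ℕ) < n1 → c.A v v = 1) ∧ (n1 ≤ (v : ℕ) → c.A v v = 0)) ∧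
    (∀ u v : Fin n, u ≠ v → n1 ≤ max (u : ℕ) (v : ℕ) →
      c.A u v = 0 ∧ c.r u v = 0 ∧ c.d u v = n ∧
      c.delta u v u = 1 ∧ c.delta u v v = 1 ∧
      ∀ w : Fin n, w ≠ u → w ≠ v → c.delta u v w = 0) := by
  obtain ⟨hAbin, hrbin, hdle, hδbin, hC1a, hC1b, hC2, hC3, hC4, hC5, hC6, hC7, hC8⟩ := hc
  -- monotonicity of the diagonal
  have hmono : ∀ k : ℕ, ∀ hk : k < n, ∀ i : Fin n, (i : ℕ) ≤ k →
      c.A ⟨k, hk⟩ ⟨k, hk⟩ ≤ c.A i i := by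
    intro k
    induction k with
    | zero =>
      intro hk i hi
      have : i = ⟨0, hk⟩ := Fin.ext (Nat.le_zero.mp hi)
      rw [this]
    | succ k ih =>
      intro hk i hi
      rcases Nat.lt_or_ge (i : ℕ) (k+1) with h | h
      · have hk' : k < n := Nat.lt_of_succ_lt hk
        have step := hC1b ⟨k, hk'⟩ hk
        exact le_trans step (ih hk' i (Nat.lt_succ_iff.mp h))
      · have : i = ⟨k+1, hk⟩ := Fin.ext (le_antisymm hi h)
        rw [this]
  have hmono' : ∀ i j : Fin n, (i : ℕ) ≤ (j : ℕ) → c.A j j ≤ c.A i i := by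
    intro i j hij
    have := hmono (j : ℕ) j.isLt i hij
    simpa using this
  -- the diagonal is the indicator of `v < n1`
  have hiff : ∀ v : Fin n, c.A v v = 1 ↔ (v : ℕ) < n1 := by
    intro v
    constructor
    · intro hv
      have hsum : ∑ i ∈ Finset.Iic v, c.A i i ≤ ∑ i, c.A i i :=
        Finset.sum_le_sum_of_subset (Finset.subset_univ _)
      have hone : ∀ i ∈ Finset.Iic v, c.A i i = 1 := by
        intro i hi
        have hle : c.A v v ≤ c.A i i := hmono' i v (Fin.le_def.mp (Finset.mem_Iic.mp hi))
        rcases hAbin i i with h0 | h1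
        · omega
        · exact h1
      have : ∑ i ∈ Finset.Iic v, c.A i i = (v : ℕ) + 1 := by
        rw [Finset.sum_congr rfl hone, Finset.sum_const, smul_eq_mul, mul_one,
          Fin.card_Iic]
      omega
    · intro hv
      by_contra hA
      have hv0 : c.A v v = 0 := (hAbin v v).resolve_right hA
      have hle : ∀ i : Fin n, c.A i i ≤ if (i : ℕ) < (v : ℕ) then 1 else 0 := by
        intro i
        split_ifs with h
        · rcases hAbin i i with h0 | h1 <;> omega
        · have := hmono' v i (Nat.le_of_not_lt h)
          omega
      have hsum : ∑ i, c.A i i ≤ ∑ i : Fin n, if (i : ℕ) < (v : ℕ) then 1 else 0 :=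
        Finset.sum_le_sum fun i _ => hle i
      have hcard : ∑ i : Fin n, (if (i : ℕ) < (v : ℕ) then 1 else 0) = (v : ℕ) := by
        rw [← Finset.sum_filter]
        have : Finset.filter (fun i : Fin n => (i : ℕ) < (v : ℕ)) Finset.univ
            = Finset.Iio v := by
          ext i
          simp only [Finset.mem_filter, Finset.mem_univ, true_and, Finset.mem_Iio,
            Fin.lt_def]
        rw [this, Finset.sum_const, smul_eq_mul, mul_one, Fin.card_Iio]
      omega
  have part1 : ∀ v : Fin n, ((v : ℕ) < n1 → c.A v v = 1) ∧ (n1 ≤ (v : ℕ) → c.A v v = 0) := by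
    intro v
    constructor
    · exact fun h => (hiff v).mpr h
    · intro h
      rcases hAbin v v with h0 | h1
      · exact h0
      · have := (hiff v).mp h1; omega
  refine ⟨part1, ?_⟩
  intro u v huv hmax
  have hdiag : c.A u u = 0 ∨ c.A v v = 0 := by
    rcases le_max_iff.mp hmax with h | h
    · exact Or.inl ((part1 u).2 h)
    · exact Or.inr ((part1 v).2 h)
  obtain ⟨hA0, hr0, hdn⟩ := hC2 u v huv hdiag
  obtain ⟨hδu, hδv, hsum2, _⟩ := hC7 u v huv
  have hsum : ∑ w, c.delta u v w = 2 := hsum2 (Or.inr hr0)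
  refine ⟨hA0, hr0, hdn, hδu, hδv, ?_⟩
  intro w hwu hwv
  have hsub : ∑ x ∈ ({w, u, v} : Finset (Fin n)), c.delta u v x ≤ 2 := by
    rw [← hsum]
    exact Finset.sum_le_sum_of_subset (Finset.subset_univ _)
  have hwm : w ∉ ({u, v} : Finset (Fin n)) := by simp [hwu, hwv]
  rw [Finset.sum_insert hwm, Finset.sum_pair huv, hδu, hδv] at hsub
  omega
end
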